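/- arXiv:1803.07054 — 2 statements merged into one kernel-verified Lean document; each statement's English description precedes it below -/
import Mathlib

section
/- Let M > 0 and let a, b ∈ [−M, M]. Then kl(σ(a), σ(b)) ≥ (σ(M)(1−σ(M))/2)·(a−b)², where σ(x) = 1/(1+e^{−x}) and kl(p,q) = p·log(p/q) + (1−p)·log((1−p)/(1−q)) is the Kullback–Leibler divergence between Bernoulli distributions with parameters p and q. -/
open Matrix MeasureTheory

noncomputable section

/-- The logistic (sigmoid) function `σ(x) = 1/(1+e^{-x})`. -/
def sigmoid (x : ℝ) : ℝ := 1 / (1 + Real.exp (-x))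

/-- Kullback–Leibler divergence between Bernoulli distributions of parameters `p` and `q`. -/
def bernKL (p q : ℝ) : ℝ :=
  p * Real.log (p / q) + (1 - p) * Real.log ((1 - p) / (1 - q))

/-- The affinity `X_iᵀ Θ X_j` where `X_i` are the columns of `X`. -/
def aff {d n : ℕ} (X : Matrix (Fin d) (Fin n) ℝ) (Θ : Matrix (Fin d) (Fin d) ℝ)
    (p : Fin n × Fin n) : ℝ :=
  (Xᵀ * Θ * X) p.1 p.2

/-- Squared Frobenius norm `‖B‖_F²`. -/
def frobSq {d : ℕ} (B : Matrix (Fin d) (Fin d) ℝ) : ℝ := ∑ i, ∑ j, (B i j) ^ 2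

/-- Squared semi-norm `‖Xᵀ B X‖²_{F,Ω} = Σ_{(i,j)∈Ω} (Xᵀ B X)_{ij}²`. -/
def frobSqOmega {d n : ℕ} (X : Matrix (Fin d) (Fin n) ℝ) (Ω : Finset (Fin n × Fin n))
    (B : Matrix (Fin d) (Fin d) ℝ) : ℝ :=
  ∑ p ∈ Ω, (aff X B p) ^ 2

/-- Entrywise ℓ₁ norm `‖Θ‖_{1,1}`. -/
def norm11 {d : ℕ} (Θ : Matrix (Fin d) (Fin d) ℝ) : ℝ := ∑ i, ∑ j, |Θ i j|

open Classical in
/-- `‖Θ‖_{0,0}`: the number of nonzero rows of `Θ`. -/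
def norm00 {d : ℕ} (Θ : Matrix (Fin d) (Fin d) ℝ) : ℕ :=
  (Finset.univ.filter (fun i => Θ i ≠ 0)).card

/-- The parameter class `𝒫_{k,r}(M)`; `𝒫(M) = ParamSet d d d M`. -/
def ParamSet (d k r : ℕ) (M : ℝ) : Set (Matrix (Fin d) (Fin d) ℝ) :=
  {Θ | Θ.IsSymm ∧ norm11 Θ < M ∧ norm00 Θ ≤ k ∧ Θ.rank ≤ r}

/-- `𝓛(M) = σ(M)(1-σ(M))`. -/
def Lconst (M : ℝ) : ℝ := sigmoid M * (1 - sigmoid M)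

/-- Probability of observing the outcome `y : Ω → Bool` under the product Bernoulli
measure `P_Θ` in which `Y_{(i,j)} ~ Bernoulli(σ(X_iᵀ Θ X_j))` independently. -/
def weightB {d n : ℕ} (X : Matrix (Fin d) (Fin n) ℝ) (Ω : Finset (Fin n × Fin n))
    (Θ : Matrix (Fin d) (Fin d) ℝ) (y : ↥Ω → Bool) : ℝ :=
  ∏ p : ↥Ω, (if y p then sigmoid (aff X Θ p.1) else 1 - sigmoid (aff X Θ p.1))

/-- Expectation `E_{Y ~ P_Θ}[f(Y)]` for the product Bernoulli measure on `{0,1}^Ω`. -/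
def expectation {d n : ℕ} (X : Matrix (Fin d) (Fin n) ℝ) (Ω : Finset (Fin n × Fin n))
    (Θ : Matrix (Fin d) (Fin d) ℝ) (f : (↥Ω → Bool) → ℝ) : ℝ :=
  ∑ y : ↥Ω → Bool, weightB X Ω Θ y * f y

/-- The log-likelihood `ℓ_y(Θ)`. -/
def loglik {d n : ℕ} (X : Matrix (Fin d) (Fin n) ℝ) (Ω : Finset (Fin n × Fin n))
    (y : ↥Ω → Bool) (Θ : Matrix (Fin d) (Fin d) ℝ) : ℝ :=
  ∑ p : ↥Ω,
    (if y p then Real.log (sigmoid (aff X Θ p.1)) else Real.log (1 - sigmoid (aff X Θ p.1)))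

/-- Kullback–Leibler divergence `KL(P_Θ, P_{Θ'})` between the product Bernoulli measures. -/
def KLdiv {d n : ℕ} (X : Matrix (Fin d) (Fin n) ℝ) (Ω : Finset (Fin n × Fin n))
    (Θ Θ' : Matrix (Fin d) (Fin d) ℝ) : ℝ :=
  ∑ p ∈ Ω, bernKL (sigmoid (aff X Θ p)) (sigmoid (aff X Θ' p))

/-- The penalty `p(Θ) = c·K·R + c·K·log(de/K)` with `K = max(‖Θ‖_{0,0},1)`, `R = rank(Θ)`. -/
def penalty (c : ℝ) (d : ℕ) (Θ : Matrix (Fin d) (Fin d) ℝ) : ℝ :=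
  c * ((max (norm00 Θ) 1 : ℕ) : ℝ) * (Θ.rank : ℝ) +
    c * ((max (norm00 Θ) 1 : ℕ) : ℝ) *
      Real.log ((d : ℝ) * Real.exp 1 / ((max (norm00 Θ) 1 : ℕ) : ℝ))

namespace Stmt15

lemma expos (x : ℝ) : (0:ℝ) < 1 + Real.exp (-x) := by positivity

lemma sig_pos (x : ℝ) : 0 < sigmoid x := by
  unfold sigmoid; positivity

lemma sig_lt_one (x : ℝ) : sigmoid x < 1 := by
  unfold sigmoid
  rw [div_lt_one (expos x)]
  linarith [Real.exp_pos (-x)]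

lemma one_sub_sig (x : ℝ) : 1 - sigmoid x = Real.exp (-x) / (1 + Real.exp (-x)) := by
  unfold sigmoid
  field_simp
  ring

/-- `G x = log (1 + e^{-x})` -/
def G (x : ℝ) : ℝ := Real.log (1 + Real.exp (-x))

lemma log_sig (x : ℝ) : Real.log (sigmoid x) = -G x := by
  unfold sigmoid G
  rw [one_div, Real.log_inv]

lemma log_one_sub_sig (x : ℝ) : Real.log (1 - sigmoid x) = -x - G x := by
  rw [one_sub_sig, Real.log_div (Real.exp_ne_zero _) (ne_of_gt (expos x)), Real.log_exp]
  ring_nf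
  rfl

lemma bernKL_eq (a b : ℝ) :
    bernKL (sigmoid a) (sigmoid b) = G b - G a - (sigmoid a - 1) * (b - a) := by
  unfold bernKL
  rw [Real.log_div (ne_of_gt (sig_pos a)) (ne_of_gt (sig_pos b)),
    Real.log_div (by linarith [sig_lt_one a]) (by linarith [sig_lt_one b]),
    log_sig, log_sig, log_one_sub_sig, log_one_sub_sig]
  ring

lemma hasDerivG (x : ℝ) : HasDerivAt G (sigmoid x - 1) x := by
  have h1 : HasDerivAt (fun x : ℝ => 1 + Real.exp (-x)) (-Real.exp (-x)) x := by
    simpa using (((Real.hasDerivAt_exp (-x)).comp x (hasDerivAt_neg x)).const_add 1)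
  have := h1.log (ne_of_gt (expos x))
  convert this using 1
  · rfl
  unfold sigmoid
  field_simp
  ring

lemma hasDerivSig (x : ℝ) : HasDerivAt sigmoid (sigmoid x * (1 - sigmoid x)) x := by
  have h1 : HasDerivAt (fun x : ℝ => 1 + Real.exp (-x)) (-Real.exp (-x)) x := by
    simpa using (((Real.hasDerivAt_exp (-x)).comp x (hasDerivAt_neg x)).const_add 1)
  have := h1.inv (ne_of_gt (expos x))
  have hfun : sigmoid = fun y : ℝ => (1 + Real.exp (-y))⁻¹ := by
    funext y; simp [sigmoid, one_div]
  have h2 : HasDerivAt sigmoid (-(-Real.exp (-x)) / (1 + Real.exp (-x)) ^ 2) x := by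
    rw [hfun]; exact this
  convert h2 using 1
  rw [one_sub_sig]
  unfold sigmoid
  field_simp

lemma sig_deriv_bound {M x : ℝ} (hx : |x| ≤ M) :
    sigmoid M * (1 - sigmoid M) ≤ sigmoid x * (1 - sigmoid x) := by
  obtain ⟨h1, h2⟩ := abs_le.mp hx
  have key : ∀ y : ℝ, sigmoid y * (1 - sigmoid y)
      = Real.exp (-y) / (1 + Real.exp (-y)) ^ 2 := by
    intro y
    rw [one_sub_sig]; unfold sigmoid; field_simp
  rw [key, key]
  have hu := Real.exp_pos (-x)
  have hv := Real.exp_pos (-M)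
  have hvM := Real.exp_pos M
  have e1 : Real.exp (-x) ≤ Real.exp M := Real.exp_le_exp.mpr (by linarith)
  have e2 : Real.exp (-M) ≤ Real.exp (-x) := Real.exp_le_exp.mpr (by linarith)
  have e3 : Real.exp (-M) * Real.exp M = 1 := by
    rw [← Real.exp_add]; simp
  rw [div_le_div_iff₀ (by positivity) (by positivity)]
  -- goal: exp(-M) * (1+exp(-x))^2 ≤ exp(-x) * (1+exp(-M))^2
  -- with u = exp(-x), w = exp(-M): w(1+u)^2 ≤ u(1+w)^2 ⟺ w + wu^2 ≤ u + uw^2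
  -- ⟺ 0 ≤ (u - w)(1 - uw); need uw ≤ 1: uw = exp(-x-M) ≤ 1 since x ≥ -M.
  have e4 : Real.exp (-x) * Real.exp (-M) ≤ 1 := by
    rw [← Real.exp_add]
    exact Real.exp_le_one_iff.mpr (by linarith)
  nlinarith [mul_nonneg (sub_nonneg.mpr e2) (sub_nonneg.mpr e4)]

end Stmt15

/-- for `a, b ∈ [-M, M]`, `kl(σ(a), σ(b)) ≥ (σ(M)(1-σ(M))/2)(a-b)²`. -/
theorem statement15 (M a b : ℝ) (hM : 0 < M) (ha : |a| ≤ M) (hb : |b| ≤ M) :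
    sigmoid M * (1 - sigmoid M) / 2 * (a - b) ^ 2 ≤ bernKL (sigmoid a) (sigmoid b) := by
  set c := sigmoid M * (1 - sigmoid M) with hc
  set g : ℝ → ℝ := fun x => Stmt15.G x - c / 2 * x ^ 2 with hgdef
  have hg : ∀ x : ℝ, HasDerivAt g (sigmoid x - 1 - c * x) x := by
    intro x
    have h := (Stmt15.hasDerivG x).sub ((hasDerivAt_pow 2 x).const_mul (c / 2))
    refine h.congr_deriv ?_
    simp
    ring
  have hg' : ∀ x : ℝ, HasDerivAt (fun x => sigmoid x - 1 - c * x)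
      (sigmoid x * (1 - sigmoid x) - c) x := by
    intro x
    have h := ((Stmt15.hasDerivSig x).sub_const 1).sub ((hasDerivAt_id x).const_mul c)
    refine h.congr_deriv ?_
    ring
  have hconv : ConvexOn ℝ (Set.Icc (-M) M) g := by
    apply convexOn_of_hasDerivWithinAt2_nonneg (convex_Icc _ _)
      (f' := fun x => sigmoid x - 1 - c * x)
      (f'' := fun x => sigmoid x * (1 - sigmoid x) - c)
      (fun x _ => (hg x).continuousAt.continuousWithinAt)
      (fun x _ => (hg x).hasDerivWithinAt)
      (fun x _ => (hg' x).hasDerivWithinAt)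
    intro x hx
    rw [interior_Icc] at hx
    have hxM : |x| ≤ M := abs_le.mpr ⟨hx.1.le, hx.2.le⟩
    have := Stmt15.sig_deriv_bound hxM
    simp only [sub_nonneg]
    linarith
  have ha' : a ∈ Set.Icc (-M) M := by
    obtain ⟨h1, h2⟩ := abs_le.mp ha; exact Set.mem_Icc.mpr ⟨h1, h2⟩
  have hb' : b ∈ Set.Icc (-M) M := by
    obtain ⟨h1, h2⟩ := abs_le.mp hb; exact Set.mem_Icc.mpr ⟨h1, h2⟩
  have key : g a + (sigmoid a - 1 - c * a) * (b - a) ≤ g b := by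
    rcases lt_trichotomy a b with h | h | h
    · have hs := hconv.le_slope_of_hasDerivAt ha' hb' h (hg a)
      rw [slope_def_field] at hs
      have := (le_div_iff₀ (sub_pos.mpr h)).mp hs
      nlinarith
    · subst h; simp
    · have hs := hconv.slope_le_of_hasDerivAt hb' ha' h (hg a)
      rw [slope_def_field] at hs
      have := (div_le_iff₀ (sub_pos.mpr h)).mp hs
      nlinarith
  rw [Stmt15.bernKL_eq a b]
  simp only [hgdef] at key
  nlinarith [key]
end
end

section
/- For all real numbers a and b, kl(σ(a), σ(b)) ≤ (a−b)²/8, where σ(x) = 1/(1+e^{−x}) and kl(p,q) = p·log(p/q) + (1−p)·log((1−p)/(1−q)) is the Kullback–Leibler divergence between Bernoulli distributions with parameters p and q. -/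
open Matrix MeasureTheory

noncomputable section

-- auxiliary lemmas for statement16
lemma one_add_exp_pos (x : ℝ) : 0 < 1 + Real.exp (-x) := by positivity

lemma sigmoid_pos (x : ℝ) : 0 < sigmoid x := by
  unfold sigmoid; positivity

lemma sigmoid_lt_one (x : ℝ) : sigmoid x < 1 := by
  unfold sigmoid
  rw [div_lt_one (one_add_exp_pos x)]
  linarith [Real.exp_pos (-x)]

lemma one_sub_sigmoid (x : ℝ) : 1 - sigmoid x = Real.exp (-x) / (1 + Real.exp (-x)) := by
  unfold sigmoid
  field_simp
  ring

lemma hasDerivAt_sigmoid (x : ℝ) :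
    HasDerivAt sigmoid (sigmoid x * (1 - sigmoid x)) x := by
  have h1 : HasDerivAt (fun y : ℝ => 1 + Real.exp (-y)) (-Real.exp (-x)) x := by
    have := (Real.hasDerivAt_exp (-x)).comp x ((hasDerivAt_id x).neg)
    simpa using (this.const_add 1)
  have h2 := h1.inv (ne_of_gt (one_add_exp_pos x))
  have heq : -(-Real.exp (-x)) / (1 + Real.exp (-x)) ^ 2
      = sigmoid x * (1 - sigmoid x) := by
    rw [one_sub_sigmoid]
    unfold sigmoid
    field_simp
  rw [heq] at h2
  refine h2.congr_of_eventuallyEq (Filter.Eventually.of_forall fun y => ?_)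
  unfold sigmoid
  simp [one_div]

lemma sigmoid_deriv_bound (x : ℝ) : ‖sigmoid x * (1 - sigmoid x)‖ ≤ 1/4 := by
  have h1 := sigmoid_pos x
  have h2 := sigmoid_lt_one x
  rw [Real.norm_eq_abs, abs_of_nonneg (by nlinarith)]
  nlinarith [sq_nonneg (sigmoid x - 1/2)]

lemma sigmoid_lipschitz (x y : ℝ) : |sigmoid y - sigmoid x| ≤ |y - x| / 4 := by
  have := Convex.norm_image_sub_le_of_norm_hasDerivWithin_le
    (f := sigmoid) (f' := fun z => sigmoid z * (1 - sigmoid z)) (s := Set.univ)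
    (fun z _ => (hasDerivAt_sigmoid z).hasDerivWithinAt)
    (fun z _ => sigmoid_deriv_bound z) convex_univ (Set.mem_univ x) (Set.mem_univ y)
  rw [Real.norm_eq_abs, Real.norm_eq_abs] at this
  linarith

-- `L x = log(1 + e^{-x})`.
def Lfn (x : ℝ) : ℝ := Real.log (1 + Real.exp (-x))

lemma hasDerivAt_Lfn (x : ℝ) : HasDerivAt Lfn (sigmoid x - 1) x := by
  have h1 : HasDerivAt (fun y : ℝ => 1 + Real.exp (-y)) (-Real.exp (-x)) x := by
    have := (Real.hasDerivAt_exp (-x)).comp x ((hasDerivAt_id x).neg)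
    simpa using (this.const_add 1)
  have h2 := h1.log (ne_of_gt (one_add_exp_pos x))
  have heq : -Real.exp (-x) / (1 + Real.exp (-x)) = sigmoid x - 1 := by
    have := one_sub_sigmoid x
    linarith [this, (by rw [neg_div] : -Real.exp (-x) / (1 + Real.exp (-x)) = -(Real.exp (-x) / (1 + Real.exp (-x))))]
  rw [heq] at h2
  exact h2

lemma bernKL_sigmoid (a b : ℝ) :
    bernKL (sigmoid a) (sigmoid b) = (Lfn b - Lfn a) + (1 - sigmoid a) * (b - a) := by
  have ha0 := sigmoid_pos a
  have hb0 := sigmoid_pos b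
  have ha1 := sigmoid_lt_one a
  have hb1 := sigmoid_lt_one b
  have hlog1 : Real.log (sigmoid a / sigmoid b) = Lfn b - Lfn a := by
    rw [Real.log_div (ne_of_gt ha0) (ne_of_gt hb0)]
    unfold sigmoid Lfn
    rw [Real.log_div one_ne_zero (ne_of_gt (one_add_exp_pos a)),
        Real.log_div one_ne_zero (ne_of_gt (one_add_exp_pos b))]
    simp; ring
  have hlog2 : Real.log ((1 - sigmoid a) / (1 - sigmoid b)) = (b - a) + (Lfn b - Lfn a) := by
    rw [one_sub_sigmoid, one_sub_sigmoid,
        Real.log_div (by positivity) (by positivity),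
        Real.log_div (ne_of_gt (Real.exp_pos _)) (ne_of_gt (one_add_exp_pos a)),
        Real.log_div (ne_of_gt (Real.exp_pos _)) (ne_of_gt (one_add_exp_pos b)),
        Real.log_exp, Real.log_exp]
    unfold Lfn
    ring
  unfold bernKL
  rw [hlog1, hlog2]
  ring

/-- for all real `a, b`, `kl(σ(a), σ(b)) ≤ (a-b)²/8`. -/
theorem statement16 (a b : ℝ) :
    bernKL (sigmoid a) (sigmoid b) ≤ (a - b) ^ 2 / 8 := by
  set F : ℝ → ℝ := fun x => (x - a) ^ 2 / 8 - (Lfn x - Lfn a) - (1 - sigmoid a) * (x - a) with hF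
  have hderiv : ∀ x, HasDerivAt F ((x - a) / 4 - (sigmoid x - sigmoid a)) x := by
    intro x
    have h1 : HasDerivAt (fun y : ℝ => (y - a) ^ 2 / 8) ((x - a) / 4) x := by
      have := (((hasDerivAt_id x).sub_const a).pow 2).div_const 8
      refine this.congr_deriv ?_
      simp only [id]
      ring
    have h2 : HasDerivAt (fun y : ℝ => Lfn y - Lfn a) (sigmoid x - 1) x :=
      (hasDerivAt_Lfn x).sub_const _
    have h3 : HasDerivAt (fun y : ℝ => (1 - sigmoid a) * (y - a)) (1 - sigmoid a) x := by
      have := ((hasDerivAt_id x).sub_const a).const_mul (1 - sigmoid a)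
      simpa using this
    have := (h1.sub h2).sub h3
    refine this.congr_deriv ?_
    ring
  have hd : Differentiable ℝ F := fun x => (hderiv x).differentiableAt
  have hFa : F a = 0 := by simp [hF]
  have key : 0 ≤ F b := by
    rcases le_total a b with hab | hab
    · have hmono : MonotoneOn F (Set.Icc a b) := by
        apply monotoneOn_of_deriv_nonneg (convex_Icc a b) hd.continuous.continuousOn
          (fun x _ => (hd x).differentiableWithinAt)
        intro x hx
        rw [interior_Icc] at hx
        rw [(hderiv x).deriv]
        have hlip := sigmoid_lipschitz a x
        have hx1 := hx.1
        rw [abs_of_nonneg (by linarith : (0:ℝ) ≤ x - a)] at hlip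
        have := (abs_le.mp hlip).2
        linarith
      calc (0:ℝ) = F a := hFa.symm
        _ ≤ F b := hmono (Set.left_mem_Icc.mpr hab) (Set.right_mem_Icc.mpr hab) hab
    · have hanti : AntitoneOn F (Set.Icc b a) := by
        apply antitoneOn_of_deriv_nonpos (convex_Icc b a) hd.continuous.continuousOn
          (fun x _ => (hd x).differentiableWithinAt)
        intro x hx
        rw [interior_Icc] at hx
        rw [(hderiv x).deriv]
        have hlip := sigmoid_lipschitz a x
        have hx2 := hx.2
        rw [abs_of_nonpos (by linarith : x - a ≤ 0)] at hlip
        have := (abs_le.mp hlip).1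
        linarith
      calc (0:ℝ) = F a := hFa.symm
        _ ≤ F b := hanti (Set.left_mem_Icc.mpr hab) (Set.right_mem_Icc.mpr hab) hab
  rw [bernKL_sigmoid]
  have : (b - a) ^ 2 = (a - b) ^ 2 := by ring
  simp only [hF] at key
  nlinarith [key]
end
end
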